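/- Classification of linear equivariant symplectomorphisms: let L : ℂⁿ → ℂⁿ be an ℝ-linear map with ω₀(L(u), L(v)) = ω₀(u, v) for all u, v ∈ ℂⁿ, and suppose there exists A ∈ GL(n, ℤ) such that L(t·z) = Λ_A(t)·L(z) for all t ∈ Tⁿ and z ∈ ℂⁿ. Then there exist a permutation σ of {1, …, n} and unit complex numbers θ₁, …, θₙ such that L(z)ᵢ = θᵢ·z_{σ(i)} for all z ∈ ℂⁿ and all i; moreover A is the permutation matrix of σ, i.e. Aᵢⱼ = 1 if j = σ(i) and Aᵢⱼ = 0 otherwise. -/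

import Mathlib

open scoped BigOperators

/-- The standard symplectic form on `ℂⁿ`: `ω₀(u, v) = ∑ₖ Im(conj(uₖ)·vₖ)`. -/
noncomputable def omega0 (n : ℕ) (u v : EuclideanSpace ℂ (Fin n)) : ℝ :=
  ∑ k, ((starRingEnd ℂ) (u k) * v k).im

/-- The componentwise rotation action of the `n`-torus `Tⁿ = (S¹)ⁿ` on `ℂⁿ`. -/
def torusSMul (n : ℕ) (t : Fin n → Circle) (z : EuclideanSpace ℂ (Fin n)) :
    EuclideanSpace ℂ (Fin n) :=
  WithLp.toLp 2 (fun k => (t k : ℂ) * z k)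

/-- For `A ∈ GL(n, ℤ)`, the induced torus automorphism `Λ_A(t)ᵢ = ∏ⱼ tⱼ^{Aᵢⱼ}`. -/
noncomputable def torusAut (n : ℕ) (A : GL (Fin n) ℤ) (t : Fin n → Circle) : Fin n → Circle :=
  fun i => ∏ j, t j ^ ((A : Matrix (Fin n) (Fin n) ℤ) i j)

/-- `φ` is symplectic on the closed ball of radius `r`: it is `C^∞` there and its
Fréchet derivative (within the ball) preserves `ω₀` at every point. -/
noncomputable def IsSymplecticOn (n : ℕ) (r : ℝ)
    (φ : EuclideanSpace ℂ (Fin n) → EuclideanSpace ℂ (Fin n)) : Prop :=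
  ContDiffOn ℝ (⊤ : ℕ∞) φ (Metric.closedBall 0 r) ∧
    ∀ z ∈ Metric.closedBall (0 : EuclideanSpace ℂ (Fin n)) r, ∀ u v,
      omega0 n (fderivWithin ℝ φ (Metric.closedBall 0 r) z u)
        (fderivWithin ℝ φ (Metric.closedBall 0 r) z v) = omega0 n u v

/-- `φ` is `Λ_A`-equivariant on the closed ball of radius `r`. -/
def IsEquivariantOn (n : ℕ) (r : ℝ) (A : GL (Fin n) ℤ)
    (φ : EuclideanSpace ℂ (Fin n) → EuclideanSpace ℂ (Fin n)) : Prop :=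
  ∀ t : Fin n → Circle, ∀ z ∈ Metric.closedBall (0 : EuclideanSpace ℂ (Fin n)) r,
    φ (torusSMul n t z) = torusSMul n (torusAut n A t) (φ z)

lemma circle_coe_zpow (t : Circle) (m : ℤ) : ((t ^ m : Circle) : ℂ) = (t : ℂ) ^ m := by
  cases m with
  | ofNat k => simp [zpow_natCast, ← map_pow Circle.coeHom]
  | negSucc k =>
      simp only [zpow_negSucc, Circle.coe_inv, ← map_pow Circle.coeHom]
      rfl

lemma torusAut_coe (n : ℕ) (A : GL (Fin n) ℤ) (t : Fin n → Circle) (i : Fin n) :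
    ((torusAut n A t i : ℂ)) = ∏ k, (t k : ℂ) ^ ((A : Matrix (Fin n) (Fin n) ℤ) i k) := by
  show (Circle.coeHom (∏ j, t j ^ ((A : Matrix (Fin n) (Fin n) ℤ) i j)) : ℂ) = _
  rw [map_prod]
  exact Finset.prod_congr rfl fun k _ => circle_coe_zpow _ _

section Keys

variable (n : ℕ) (L : EuclideanSpace ℂ (Fin n) →ₗ[ℝ] EuclideanSpace ℂ (Fin n))
  (A : GL (Fin n) ℤ)
  (hequiv : ∀ t : Fin n → Circle, ∀ z : EuclideanSpace ℂ (Fin n),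
      L (torusSMul n t z) = torusSMul n (torusAut n A t) (L z))

include hequiv in
lemma key1_lemma (i j : Fin n) (θ : ℝ) :
    (Real.cos θ : ℂ) * L (EuclideanSpace.single j 1) i
      + (Real.sin θ : ℂ) * L (EuclideanSpace.single j Complex.I) i
      = Complex.exp (↑θ * Complex.I) ^ ((A : Matrix (Fin n) (Fin n) ℤ) i j)
        * L (EuclideanSpace.single j 1) i := by
  classical
  set t : Fin n → Circle := fun l => if l = j then Circle.exp θ else 1 with ht
  have hz : torusSMul n t (EuclideanSpace.single j (1:ℂ)) =
      Real.cos θ • EuclideanSpace.single j (1:ℂ)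
        + Real.sin θ • EuclideanSpace.single j Complex.I := by
    ext k
    simp only [torusSMul, PiLp.toLp_apply, PiLp.add_apply, PiLp.smul_apply, EuclideanSpace.single_apply, ht]
    by_cases hkj : k = j
    · subst hkj
      simp only [if_true, if_pos rfl, Circle.coe_exp, Complex.exp_mul_I, Complex.real_smul,
        Complex.ofReal_cos, Complex.ofReal_sin, mul_one]
    · simp [hkj]
  have heq := hequiv t (EuclideanSpace.single j 1)
  rw [hz, map_add, map_smul, map_smul] at heq
  have hc := congrArg (fun v : EuclideanSpace ℂ (Fin n) => v i) heq
  simp only [PiLp.add_apply, PiLp.smul_apply, Complex.real_smul] at hc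
  have hprod : torusAut n A t i
      = (Circle.exp θ) ^ ((A : Matrix (Fin n) (Fin n) ℤ) i j) := by
    show (∏ k, t k ^ ((A : Matrix (Fin n) (Fin n) ℤ) i k)) = _
    rw [Finset.prod_eq_single j (fun l _ hl => by simp [ht, hl, one_zpow]) (by simp)]
    simp [ht]
  have hrhs : torusSMul n (torusAut n A t) (L (EuclideanSpace.single j 1)) i
      = Complex.exp (↑θ * Complex.I) ^ ((A : Matrix (Fin n) (Fin n) ℤ) i j)
        * L (EuclideanSpace.single j 1) i := by
    show ((torusAut n A t i : ℂ)) * _ = _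
    rw [hprod, circle_coe_zpow, Circle.coe_exp]
  rw [hrhs] at hc
  exact hc

include hequiv in
lemma key2_lemma (i j k : Fin n) (hkj : k ≠ j)
    (hM : L (EuclideanSpace.single j 1) i ≠ 0)
    (haux : ∀ m : ℤ, (∀ θ : ℝ, Complex.exp (↑θ * Complex.I) ^ m = 1) → m = 0) :
    (A : Matrix (Fin n) (Fin n) ℤ) i k = 0 := by
  classical
  apply haux
  intro θ
  set t : Fin n → Circle := fun l => if l = k then Circle.exp θ else 1 with ht
  have hz : torusSMul n t (EuclideanSpace.single j (1:ℂ)) = EuclideanSpace.single j 1 := by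
    ext l
    simp only [torusSMul, PiLp.toLp_apply, EuclideanSpace.single_apply, ht]
    by_cases hlj : l = j
    · subst hlj
      simp [Ne.symm hkj]
    · simp [hlj]
  have heq := hequiv t (EuclideanSpace.single j 1)
  rw [hz] at heq
  have hc : L (EuclideanSpace.single j (1:ℂ)) i
      = torusSMul n (torusAut n A t) (L (EuclideanSpace.single j 1)) i :=
    congrArg (fun v : EuclideanSpace ℂ (Fin n) => v i) heq
  have hprod : torusAut n A t i
      = (Circle.exp θ) ^ ((A : Matrix (Fin n) (Fin n) ℤ) i k) := by
    show (∏ l, t l ^ ((A : Matrix (Fin n) (Fin n) ℤ) i l)) = _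
    rw [Finset.prod_eq_single k (fun l _ hl => by simp [ht, hl, one_zpow]) (by simp)]
    simp [ht]
  have hrhs : torusSMul n (torusAut n A t) (L (EuclideanSpace.single j 1)) i
      = Complex.exp (↑θ * Complex.I) ^ ((A : Matrix (Fin n) (Fin n) ℤ) i k)
        * L (EuclideanSpace.single j 1) i := by
    show ((torusAut n A t i : ℂ)) * _ = _
    rw [hprod, circle_coe_zpow, Circle.coe_exp]
  rw [hrhs] at hc
  have h1 : (1 : ℂ) * L (EuclideanSpace.single j 1) i
      = Complex.exp (↑θ * Complex.I) ^ ((A : Matrix (Fin n) (Fin n) ℤ) i k)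
        * L (EuclideanSpace.single j 1) i := by
    rw [one_mul]; exact hc
  exact (mul_right_cancel₀ hM h1).symm

lemma expand_lemma (z : EuclideanSpace ℂ (Fin n)) (i : Fin n) :
    L z i = ∑ j, (((z j).re : ℂ) * L (EuclideanSpace.single j 1) i
      + ((z j).im : ℂ) * L (EuclideanSpace.single j Complex.I) i) := by
  classical
  have hzd : z = ∑ j, ((z j).re • EuclideanSpace.single j (1:ℂ)
      + (z j).im • EuclideanSpace.single j Complex.I) := by
    ext k
    rw [WithLp.ofLp_sum, Finset.sum_apply]
    simp only [PiLp.add_apply, PiLp.smul_apply, EuclideanSpace.single_apply,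
      Complex.real_smul]
    rw [Finset.sum_congr rfl (fun j _ => by
      by_cases h : k = j
      · subst h; simp
      · simp [h] : ∀ j ∈ Finset.univ,
        (↑(z j).re * (if k = j then (1:ℂ) else 0) + ↑(z j).im * (if k = j then Complex.I else 0))
          = if k = j then ↑(z j).re + ↑(z j).im * Complex.I else 0)]
    rw [Finset.sum_ite_eq Finset.univ k
      (fun j => (↑(z j).re + ↑(z j).im * Complex.I : ℂ))]
    simp [Complex.re_add_im]
  conv_lhs => rw [hzd]
  rw [map_sum]
  rw [WithLp.ofLp_sum, Finset.sum_apply]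
  refine Finset.sum_congr rfl fun j _ => ?_
  rw [map_add, map_smul, map_smul]
  simp [PiLp.add_apply, PiLp.smul_apply, Complex.real_smul]

end Keys

section CharLemma
open Complex

lemma aux0 (m : ℤ) (h : ∀ θ : ℝ, Complex.exp (↑θ * Complex.I) ^ m = 1) : m = 0 := by
  by_contra hm
  have h1 := h (Real.pi / m)
  rw [← Complex.exp_int_mul] at h1
  have h2 : (m : ℂ) * (↑(Real.pi / (m:ℝ)) * Complex.I) = ↑Real.pi * Complex.I := by
    have : (m : ℂ) ≠ 0 := Int.cast_ne_zero.mpr hm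
    push_cast
    field_simp
  rw [h2, Complex.exp_pi_mul_I] at h1
  norm_num at h1

lemma char_lemma (m : ℤ) (a b : ℂ) (ha : a ≠ 0)
    (h : ∀ θ : ℝ, (Real.cos θ : ℂ) * a + (Real.sin θ : ℂ) * b
      = Complex.exp (↑θ * Complex.I) ^ m * a) :
    (m = 1 ∧ b = Complex.I * a) ∨ (m = -1 ∧ b = -(Complex.I * a)) := by
  have hexp : ∀ θ : ℝ, Complex.exp (↑θ * Complex.I) ≠ 0 := fun θ => Complex.exp_ne_zero _
  -- m is odd
  have hpi := h Real.pi
  simp only [Real.cos_pi, Real.sin_pi, ofReal_neg, ofReal_one, ofReal_zero, zero_mul,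
    add_zero, neg_one_mul] at hpi
  have hm1 : Complex.exp (↑Real.pi * Complex.I) ^ m = -1 := by
    have : Complex.exp (↑Real.pi * Complex.I) ^ m * a = (-1 : ℂ) * a := by
      rw [← hpi]; ring
    have := mul_right_cancel₀ ha this
    simpa using this
  rw [Complex.exp_pi_mul_I] at hm1
  have hodd : Odd m := by
    rcases Int.even_or_odd m with he | ho
    · rw [he.neg_one_zpow] at hm1; norm_num at hm1
    · exact ho
  obtain ⟨k, hk⟩ := hodd
  -- value of b
  have hI : Complex.exp (↑(Real.pi / 2) * Complex.I) = Complex.I := by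
    rw [Complex.exp_mul_I, ← Complex.ofReal_cos, ← Complex.ofReal_sin,
      Real.cos_pi_div_two, Real.sin_pi_div_two]
    simp
  have h2 := h (Real.pi / 2)
  rw [Real.cos_pi_div_two, Real.sin_pi_div_two, hI] at h2
  simp only [ofReal_zero, zero_mul, ofReal_one, one_mul, zero_add] at h2
  have hIm : Complex.I ^ m = (-1 : ℂ) ^ k * Complex.I := by
    rw [hk, zpow_add_one₀ Complex.I_ne_zero, zpow_mul, zpow_two, Complex.I_mul_I]
  rcases Int.even_or_odd k with hke | hko
  · -- b = I * a, m = 1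
    have hb : b = Complex.I * a := by rw [h2, hIm, hke.neg_one_zpow, one_mul]
    left
    refine ⟨?_, hb⟩
    have hco : ∀ θ : ℝ, Complex.exp (↑θ * Complex.I) ^ m = Complex.exp (↑θ * Complex.I) := by
      intro θ
      have h3 : Complex.exp (↑θ * Complex.I) ^ m * a = Complex.exp (↑θ * Complex.I) * a := by
        rw [← h θ, hb, Complex.exp_mul_I, ← Complex.ofReal_cos, ← Complex.ofReal_sin]; ring
      exact mul_right_cancel₀ ha h3
    have hone : ∀ θ : ℝ, Complex.exp (↑θ * Complex.I) ^ (m - 1) = 1 := by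
      intro θ
      rw [zpow_sub₀ (hexp θ), hco θ, zpow_one, div_self (hexp θ)]
    have := aux0 (m - 1) hone
    omega
  · -- b = -(I * a), m = -1
    have hb : b = -(Complex.I * a) := by rw [h2, hIm, hko.neg_one_zpow]; ring
    right
    refine ⟨?_, hb⟩
    have hco : ∀ θ : ℝ, Complex.exp (↑θ * Complex.I) ^ m = (Complex.exp (↑θ * Complex.I))⁻¹ := by
      intro θ
      have h3 : Complex.exp (↑θ * Complex.I) ^ m * a
          = (Complex.exp (↑θ * Complex.I))⁻¹ * a := by
        rw [← h θ, hb, ← Complex.exp_neg]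
        have : -(↑θ * Complex.I) = (↑(-θ) : ℂ) * Complex.I := by push_cast; ring
        rw [this, Complex.exp_mul_I, ← Complex.ofReal_cos, ← Complex.ofReal_sin,
          Real.cos_neg, Real.sin_neg]
        push_cast; ring
      exact mul_right_cancel₀ ha h3
    have hone : ∀ θ : ℝ, Complex.exp (↑θ * Complex.I) ^ (m + 1) = 1 := by
      intro θ
      rw [zpow_add_one₀ (hexp θ), hco θ, inv_mul_cancel₀ (hexp θ)]
    have := aux0 (m + 1) hone
    omega

end CharLemma

lemma mem_circle_of_normSq (z : ℂ) (h : Complex.normSq z = 1) :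
    z ∈ Submonoid.unitSphere ℂ := by
  have habs : ‖z‖ = 1 := by
    have := Complex.sq_norm z
    nlinarith [norm_nonneg z]
  simp [Submonoid.unitSphere, mem_sphere_zero_iff_norm, habs]

/-- Classification of linear equivariant symplectomorphisms: an ℝ-linear map on `ℂⁿ`
preserving `ω₀` and equivariant with respect to `Λ_A` for some `A ∈ GL(n, ℤ)` is a
rotation `L(z)ᵢ = θᵢ·z_{σ(i)}` for a permutation `σ` and unit complex numbers `θᵢ`;
moreover `A` is the permutation matrix of `σ`. -/
theorem linear_equivariant_symplectic_classification (n : ℕ) (hn : 1 ≤ n)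
    (L : EuclideanSpace ℂ (Fin n) →ₗ[ℝ] EuclideanSpace ℂ (Fin n))
    (hsymp : ∀ u v, omega0 n (L u) (L v) = omega0 n u v)
    (A : GL (Fin n) ℤ)
    (hequiv : ∀ t : Fin n → Circle, ∀ z : EuclideanSpace ℂ (Fin n),
      L (torusSMul n t z) = torusSMul n (torusAut n A t) (L z)) :
    ∃ σ : Equiv.Perm (Fin n), ∃ θ : Fin n → Circle,
      (∀ z : EuclideanSpace ℂ (Fin n), ∀ i, L z i = (θ i : ℂ) * z (σ i)) ∧
      (∀ i j, (A : Matrix (Fin n) (Fin n) ℤ) i j = if j = σ i then 1 else 0) := by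
  classical
  have key1 := key1_lemma n L A hequiv
  have key2 : ∀ i j k, k ≠ j → L (EuclideanSpace.single j 1) i ≠ 0 →
      (A : Matrix (Fin n) (Fin n) ℤ) i k = 0 :=
    fun i j k h hM => key2_lemma n L A hequiv i j k h hM aux0
  have key3 : ∀ i j, L (EuclideanSpace.single j 1) i ≠ 0 →
      ((A : Matrix (Fin n) (Fin n) ℤ) i j = 1 ∧
        L (EuclideanSpace.single j Complex.I) i
          = Complex.I * L (EuclideanSpace.single j 1) i)
      ∨ ((A : Matrix (Fin n) (Fin n) ℤ) i j = -1 ∧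
        L (EuclideanSpace.single j Complex.I) i
          = -(Complex.I * L (EuclideanSpace.single j 1) i)) :=
    fun i j h => char_lemma _ _ _ h (fun θ => key1 i j θ)
  have keyMN : ∀ i j, L (EuclideanSpace.single j 1) i = 0 →
      L (EuclideanSpace.single j Complex.I) i = 0 := by
    intro i j h
    have h1 := key1 i j (Real.pi / 2)
    rw [h, Real.cos_pi_div_two, Real.sin_pi_div_two] at h1
    simpa using h1
  -- L is injective, hence surjective
  have hker : ∀ w : EuclideanSpace ℂ (Fin n), L w = 0 → w = 0 := by
    intro w hw
    have h1 : omega0 n (L w) (L ((Complex.I : ℂ) • w))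
        = omega0 n w ((Complex.I : ℂ) • w) := hsymp _ _
    rw [hw] at h1
    have h2 : omega0 n (0 : EuclideanSpace ℂ (Fin n)) (L ((Complex.I : ℂ) • w)) = 0 := by
      simp [omega0]
    have h3 : omega0 n w ((Complex.I : ℂ) • w) = ∑ k, Complex.normSq (w k) := by
      unfold omega0
      refine Finset.sum_congr rfl fun k _ => ?_
      simp only [PiLp.smul_apply, smul_eq_mul]
      simp [Complex.mul_im, Complex.mul_re, Complex.normSq_apply]
      try ring
    have h4 : ∑ k, Complex.normSq (w k) = 0 := by
      rw [← h3, ← h1]; exact h2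
    ext k
    have h5 := (Finset.sum_eq_zero_iff_of_nonneg
      (fun k _ => Complex.normSq_nonneg (w k))).mp h4 k (Finset.mem_univ k)
    exact Complex.normSq_eq_zero.mp h5
  have hinj : Function.Injective L := by
    intro u v huv
    have h0 : L (u - v) = 0 := by rw [map_sub, huv, sub_self]
    exact sub_eq_zero.mp (hker _ h0)
  have hsurj : Function.Surjective L := LinearMap.injective_iff_surjective.mp hinj
  -- each row has a nonzero entry
  have hex : ∀ i, ∃ j, L (EuclideanSpace.single j 1) i ≠ 0 := by
    intro i
    by_contra hcon
    push_neg at hcon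
    obtain ⟨z, hz⟩ := hsurj (EuclideanSpace.single i 1)
    have h1 : L z i = 1 := by rw [hz]; simp [EuclideanSpace.single_apply]
    rw [expand_lemma n L z i] at h1
    have h2 : ∑ j, (((z j).re : ℂ) * L (EuclideanSpace.single j 1) i
        + ((z j).im : ℂ) * L (EuclideanSpace.single j Complex.I) i) = 0 :=
      Finset.sum_eq_zero fun j _ => by rw [hcon j, keyMN i j (hcon j)]; ring
    rw [h2] at h1
    exact zero_ne_one h1
  choose σ0 hM0 using hex
  have huniq : ∀ i j, L (EuclideanSpace.single j 1) i ≠ 0 → j = σ0 i := by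
    intro i j hj
    by_contra hne
    have h1 : (A : Matrix (Fin n) (Fin n) ℤ) i (σ0 i) = 0 :=
      key2 i j (σ0 i) (fun h => hne h.symm) hj
    rcases key3 i (σ0 i) (hM0 i) with ⟨h2, -⟩ | ⟨h2, -⟩ <;> simp [h1] at h2
  have hM0' : ∀ i, ∀ j, j ≠ σ0 i → L (EuclideanSpace.single j 1) i = 0 := by
    intro i j hj
    by_contra hnz
    exact hj (huniq i j hnz)
  have hAzero : ∀ i k, k ≠ σ0 i → (A : Matrix (Fin n) (Fin n) ℤ) i k = 0 :=
    fun i k hk => key2 i (σ0 i) k hk (hM0 i)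
  have hAnz : ∀ i, (A : Matrix (Fin n) (Fin n) ℤ) i (σ0 i) ≠ 0 := by
    intro i
    rcases key3 i (σ0 i) (hM0 i) with ⟨h, -⟩ | ⟨h, -⟩ <;> rw [h] <;> norm_num
  -- σ0 is injective
  have hAB : (A : Matrix (Fin n) (Fin n) ℤ)
      * ((A⁻¹ : GL (Fin n) ℤ) : Matrix (Fin n) (Fin n) ℤ) = 1 := A.mul_inv
  have hσinj : Function.Injective σ0 := by
    intro i i' hii
    by_contra hne
    set B := ((A⁻¹ : GL (Fin n) ℤ) : Matrix (Fin n) (Fin n) ℤ) with hB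
    have e1 : ∑ k, (A : Matrix (Fin n) (Fin n) ℤ) i' k * B k i = 0 := by
      have h := congrArg (fun C : Matrix (Fin n) (Fin n) ℤ => C i' i) hAB
      simpa [Matrix.mul_apply, Matrix.one_apply, Ne.symm hne] using h
    have e2 : ∑ k, (A : Matrix (Fin n) (Fin n) ℤ) i k * B k i = 1 := by
      have h := congrArg (fun C : Matrix (Fin n) (Fin n) ℤ => C i i) hAB
      simpa [Matrix.mul_apply, Matrix.one_apply] using h
    have r1 : (A : Matrix (Fin n) (Fin n) ℤ) i' (σ0 i) * B (σ0 i) i = 0 := by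
      rw [← e1]
      symm
      refine Finset.sum_eq_single (σ0 i) (fun k _ hk => ?_)
        (fun h => absurd (Finset.mem_univ _) h)
      rw [hAzero i' k (by rw [← hii]; exact hk), zero_mul]
    have hBz : B (σ0 i) i = 0 := by
      rcases mul_eq_zero.mp r1 with h | h
      · exact absurd h (by rw [hii]; exact hAnz i')
      · exact h
    have r2 : (A : Matrix (Fin n) (Fin n) ℤ) i (σ0 i) * B (σ0 i) i = 1 := by
      rw [← e2]
      symm
      refine Finset.sum_eq_single (σ0 i) (fun k _ hk => ?_)
        (fun h => absurd (Finset.mem_univ _) h)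
      rw [hAzero i k hk, zero_mul]
    rw [hBz, mul_zero] at r2
    exact zero_ne_one r2
  -- symplectic normalization
  have hsym2 : ∀ i, (A : Matrix (Fin n) (Fin n) ℤ) i (σ0 i) = 1 ∧
      L (EuclideanSpace.single (σ0 i) Complex.I) i
        = Complex.I * L (EuclideanSpace.single (σ0 i) 1) i ∧
      Complex.normSq (L (EuclideanSpace.single (σ0 i) 1) i) = 1 := by
    intro i
    have hO : omega0 n (EuclideanSpace.single (σ0 i) (1 : ℂ))
        (EuclideanSpace.single (σ0 i) Complex.I) = 1 := by
      unfold omega0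
      rw [Finset.sum_eq_single (σ0 i)
        (fun k _ hk => by simp [EuclideanSpace.single_apply, hk])
        (fun h => absurd (Finset.mem_univ _) h)]
      simp [EuclideanSpace.single_apply]
    have h1 : ∑ i', ((starRingEnd ℂ) (L (EuclideanSpace.single (σ0 i) 1) i')
        * L (EuclideanSpace.single (σ0 i) Complex.I) i').im = 1 := by
      have h := hsymp (EuclideanSpace.single (σ0 i) 1)
        (EuclideanSpace.single (σ0 i) Complex.I)
      rw [hO] at h
      simpa [omega0] using h
    have h2 : ((starRingEnd ℂ) (L (EuclideanSpace.single (σ0 i) 1) i)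
        * L (EuclideanSpace.single (σ0 i) Complex.I) i).im = 1 := by
      rw [← h1]
      symm
      refine Finset.sum_eq_single i (fun i' _ hi' => ?_)
        (fun h => absurd (Finset.mem_univ _) h)
      have hz : L (EuclideanSpace.single (σ0 i) 1) i' = 0 := by
        by_contra hnz
        exact hi' (hσinj (huniq i' (σ0 i) hnz).symm)
      rw [hz]
      simp
    rcases key3 i (σ0 i) (hM0 i) with ⟨hA1, hN⟩ | ⟨hA1, hN⟩
    · refine ⟨hA1, hN, ?_⟩
      rw [hN] at h2
      have he : ((starRingEnd ℂ) (L (EuclideanSpace.single (σ0 i) 1) i)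
          * (Complex.I * L (EuclideanSpace.single (σ0 i) 1) i)).im
          = Complex.normSq (L (EuclideanSpace.single (σ0 i) 1) i) := by
        simp [Complex.mul_im, Complex.mul_re, Complex.normSq_apply]
        try ring
      rw [he] at h2
      exact h2
    · exfalso
      rw [hN] at h2
      have he : ((starRingEnd ℂ) (L (EuclideanSpace.single (σ0 i) 1) i)
          * -(Complex.I * L (EuclideanSpace.single (σ0 i) 1) i)).im
          = -Complex.normSq (L (EuclideanSpace.single (σ0 i) 1) i) := by
        simp [Complex.mul_im, Complex.mul_re, Complex.normSq_apply]
        try ring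
      rw [he] at h2
      have := Complex.normSq_nonneg (L (EuclideanSpace.single (σ0 i) 1) i)
      linarith
  -- conclusion
  have hLz : ∀ z : EuclideanSpace ℂ (Fin n), ∀ i,
      L z i = L (EuclideanSpace.single (σ0 i) 1) i * z (σ0 i) := by
    intro z i
    rw [expand_lemma n L z i]
    rw [Finset.sum_eq_single (σ0 i)
      (fun j _ hj => by rw [hM0' i j hj, keyMN i j (hM0' i j hj)]; ring)
      (fun h => absurd (Finset.mem_univ _) h)]
    rw [(hsym2 i).2.1]
    conv_rhs => rw [← Complex.re_add_im (z (σ0 i))]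
    ring
  refine ⟨Equiv.ofBijective σ0 (Finite.injective_iff_bijective.mp hσinj),
    fun i => ⟨L (EuclideanSpace.single (σ0 i) 1) i,
      mem_circle_of_normSq _ (hsym2 i).2.2⟩, fun z i => ?_, fun i j => ?_⟩
  · rw [hLz z i]; rfl
  · simp only [Equiv.ofBijective_apply]
    by_cases hj : j = σ0 i
    · rw [if_pos hj, hj]; exact (hsym2 i).1
    · rw [if_neg hj]; exact hAzero i j hj
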